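/- arXiv:math/0304215 — 2 statements merged into one kernel-verified Lean document; each statement's English description precedes it below -/
import Mathlib

section
/- Fix integers N and n with 1 ≤ n < N, a real θ > 2, reals g ≥ 0, δ > 0, and real numbers α, β. Let x_1,…,x_N be i.i.d. Gamma(θ,1) random variables; let u_1,…,u_N be square-integrable real random variables with E[u_i | x_1,…,x_N] = 0, E[u_i² | x_1,…,x_N] = δ x_i^g, and E[u_i u_j | x_1,…,x_N] = 0 for i ≠ j, all almost surely; set y_i = α + β x_i + u_i. Let s ⊆ {1,…,N} be any subset of size n and ȳ_s = (1/n)Σ_{i∈s} y_i. Then the model expectation of the variance of the usual unbiased estimator satisfies E[(ȳ_s − Ȳ)²] = (N − n)·[β²θ + δ·Γ(θ + g)/Γ(θ)] / (nN). -/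
open MeasureTheory ProbabilityTheory
open scoped ENNReal NNReal

private lemma mul_L2_integrable {Ω : Type*} {mΩ : MeasurableSpace Ω} {P : Measure Ω}
    {f h : Ω → ℝ} (hf : MemLp f 2 P) (hh : MemLp h 2 P) :
    Integrable (fun ω => f ω * h ω) P := by
  have hint : Integrable (fun ω => (f ω ^ 2 + h ω ^ 2) / 2) P :=
    (hf.integrable_sq.add hh.integrable_sq).div_const 2
  refine hint.mono' (hf.aestronglyMeasurable.mul hh.aestronglyMeasurable) ?_
  filter_upwards with ω
  rw [Real.norm_eq_abs, abs_mul]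
  nlinarith [abs_nonneg (f ω), abs_nonneg (h ω), sq_abs (f ω), sq_abs (h ω),
    sq_nonneg (|f ω| - |h ω|)]

private lemma gamma_rpow_aux {θ p : ℝ} (hθ : 1 < θ) (hp : 0 < θ + p) :
    Integrable (fun x : ℝ => x ^ p) (gammaMeasure θ 1) ∧
    ∫ x : ℝ, x ^ p ∂(gammaMeasure θ 1) = Real.Gamma (θ + p) / Real.Gamma θ := by
  have hθ0 : 0 < θ := by linarith
  have hΓ : 0 < Real.Gamma θ := Real.Gamma_pos_of_pos hθ0
  have hγ : gammaMeasure θ 1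
      = (volume : Measure ℝ).withDensity (fun x => ((gammaPDFReal θ 1 x).toNNReal : ℝ≥0∞)) := rfl
  have hmeas : Measurable (fun x => (gammaPDFReal θ 1 x).toNNReal) :=
    (measurable_gammaPDFReal θ 1).real_toNNReal
  have htor : ∀ x : ℝ, ((gammaPDFReal θ 1 x).toNNReal : ℝ) = gammaPDFReal θ 1 x :=
    fun x => Real.coe_toNNReal _ (gammaPDFReal_nonneg hθ0 one_pos x)
  set F : ℝ → ℝ :=
    (Set.Ioi (0:ℝ)).indicator (fun x => (x ^ (θ + p - 1) * Real.exp (-(1 * x))) / Real.Gamma θ)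
    with hF
  have hne : ∀ᵐ x : ℝ ∂volume, x ≠ 0 := by
    rw [ae_iff]
    simpa using measure_singleton (0 : ℝ)
  have hae : (fun x : ℝ => x ^ p * ((gammaPDFReal θ 1 x).toNNReal : ℝ)) =ᵐ[volume] F := by
    filter_upwards [hne] with x hx
    rcases hx.lt_or_gt with hx0 | hx0
    · rw [htor, hF, Set.indicator_of_notMem (by simpa using hx0.not_gt),
        gammaPDFReal, if_neg (not_le.mpr hx0), mul_zero]
    · rw [htor, hF, Set.indicator_of_mem (Set.mem_Ioi.mpr hx0), gammaPDFReal, if_pos hx0.le]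
      have h1 : θ + p - 1 = p + (θ - 1) := by ring
      rw [h1, Real.rpow_add hx0, Real.one_rpow]
      ring
  have hIeq : (fun x : ℝ => (x ^ (θ + p - 1) * Real.exp (-(1 * x))) / Real.Gamma θ)
      = fun x : ℝ => (Real.exp (-x) * x ^ (θ + p - 1)) / Real.Gamma θ := by
    funext x; rw [one_mul, mul_comm]
  have hIOn : IntegrableOn
      (fun x : ℝ => (x ^ (θ + p - 1) * Real.exp (-(1 * x))) / Real.Gamma θ) (Set.Ioi 0) := by
    rw [hIeq]
    exact (Real.GammaIntegral_convergent hp).div_const _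
  constructor
  · rw [hγ, integrable_withDensity_iff_integrable_smul hmeas]
    have hFint : Integrable F := by
      rw [hF, integrable_indicator_iff measurableSet_Ioi]; exact hIOn
    refine hFint.congr ?_
    filter_upwards [hae] with x hx
    rw [NNReal.smul_def, smul_eq_mul, mul_comm]
    exact hx.symm
  · rw [hγ, integral_withDensity_eq_integral_smul hmeas]
    have heq2 : (fun x : ℝ => (gammaPDFReal θ 1 x).toNNReal • (x ^ p)) =ᵐ[volume] F := by
      filter_upwards [hae] with x hx
      rw [NNReal.smul_def, smul_eq_mul, mul_comm, hx]
    rw [integral_congr_ae heq2, hF, integral_indicator measurableSet_Ioi, integral_div,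
      Real.integral_rpow_mul_exp_neg_mul_Ioi hp one_pos]
    norm_num

set_option maxHeartbeats 1000000 in
/-- Under the super-population model `y_i = α + β x_i + u_i` with `x_1, …, x_N` i.i.d.
`Gamma(θ,1)`, `E[u_i | x] = 0`, `E[u_i² | x] = δ x_i^g` and `E[u_i u_j | x] = 0` for
`i ≠ j`, the model expectation of the variance of the usual unbiased estimator
(the sample mean `ȳ_s` over a sample `s` of size `n`) is
`(N-n)[β²θ + δ Γ(θ+g)/Γ(θ)]/(nN)` (formula (3.17) of the paper). -/
theorem sample_mean_model_variance
    {Ω : Type*} [MeasurableSpace Ω] (P : Measure Ω) [IsProbabilityMeasure P]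
    (N n : ℕ) (hn : 1 ≤ n) (hnN : n < N)
    (θ g δ : ℝ) (hθ : 2 < θ) (hg0 : 0 ≤ g) (hδ : 0 < δ)
    (α β : ℝ)
    (x : Fin N → Ω → ℝ) (hxmeas : ∀ i, Measurable (x i))
    (hindep : iIndepFun x P)
    (hxdist : ∀ i, P.map (x i) = gammaMeasure θ 1)
    (u : Fin N → Ω → ℝ) (hu_sqint : ∀ i, MemLp (u i) 2 P)
    (mX : MeasurableSpace Ω)
    (hmX : mX = MeasurableSpace.comap (fun ω (j : Fin N) => x j ω) inferInstance)
    (hu_cond : ∀ i, P[u i | mX] =ᵐ[P] 0)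
    (hu_var : ∀ i, P[fun ω => (u i ω) ^ 2 | mX] =ᵐ[P] fun ω => δ * x i ω ^ g)
    (hu_cross : ∀ i j, i ≠ j → P[fun ω => u i ω * u j ω | mX] =ᵐ[P] 0)
    (y : Fin N → Ω → ℝ) (hy : ∀ i ω, y i ω = α + β * x i ω + u i ω)
    (s : Finset (Fin N)) (hs : s.card = n) :
    ∫ ω, ((∑ i ∈ s, y i ω) / n - (∑ i, y i ω) / N) ^ 2 ∂P
      = ((N : ℝ) - n) * (β ^ 2 * θ + δ * Real.Gamma (θ + g) / Real.Gamma θ)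
          / (n * N) := by
  have hΓ : 0 < Real.Gamma θ := Real.Gamma_pos_of_pos (by linarith)
  have hr2 : ∀ t : ℝ, t ^ (2:ℝ) = t ^ 2 := fun t => by
    rw [show (2:ℝ) = ((2:ℕ):ℝ) by norm_num, Real.rpow_natCast]
  set M : ℝ := Real.Gamma (θ + g) / Real.Gamma θ with hM
  -- basic measurability facts
  rename_i m0 hprob
  have hπ : @Measurable Ω (Fin N → ℝ) m0 _ (fun ω (j : Fin N) => x j ω) :=
    @measurable_pi_lambda Ω (Fin N) (fun _ => ℝ) m0 _ _ hxmeas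
  have hm : mX ≤ m0 := le_trans (le_of_eq hmX) hπ.comap_le
  haveI : SigmaFinite (P.trim hm) := (isFiniteMeasure_trim hm).toSigmaFinite
  have hxmX : ∀ i, StronglyMeasurable[mX] (x i) := by
    intro i
    have : Measurable[mX] (fun ω (j : Fin N) => x j ω) := by
      rw [hmX]; exact Measurable.of_comap_le le_rfl
    exact ((measurable_pi_apply i).comp this).stronglyMeasurable
  -- moments of the gamma variables
  have transfer : ∀ (i : Fin N) (p : ℝ), 0 < θ + p →
      Integrable (fun ω => x i ω ^ p) P ∧
        ∫ ω, x i ω ^ p ∂P = Real.Gamma (θ + p) / Real.Gamma θ := by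
    intro i p hp
    obtain ⟨hint, hval⟩ := gamma_rpow_aux (by linarith : (1:ℝ) < θ) hp
    have hfm : Measurable (fun t : ℝ => t ^ p) := by measurability
    rw [← hxdist i] at hint hval
    constructor
    · exact (integrable_map_measure hfm.aestronglyMeasurable (hxmeas i).aemeasurable).mp hint
    · rw [integral_map (hxmeas i).aemeasurable hfm.aestronglyMeasurable] at hval
      exact hval
  have hEx : ∀ i, ∫ ω, x i ω ∂P = θ := by
    intro i
    obtain ⟨_, hval⟩ := transfer i 1 (by linarith)
    have h1 : ∫ ω, x i ω ∂P = ∫ ω, x i ω ^ (1:ℝ) ∂P := by simp [Real.rpow_one]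
    rw [h1, hval, Real.Gamma_add_one (by positivity), mul_div_assoc, div_self hΓ.ne', mul_one]
  have hx2 : ∀ i, MemLp (x i) 2 P := by
    intro i
    have h2 := (transfer i 2 (by linarith)).1
    have hsq : Integrable (fun ω => x i ω ^ 2) P := by
      refine h2.congr ?_
      filter_upwards with ω
      exact hr2 (x i ω)
    exact (memLp_two_iff_integrable_sq (hxmeas i).aestronglyMeasurable).mpr hsq
  have hEx2 : ∀ i, ∫ ω, x i ω ^ 2 ∂P = θ ^ 2 + θ := by
    intro i
    obtain ⟨_, hval⟩ := transfer i 2 (by linarith)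
    have h1 : ∫ ω, x i ω ^ 2 ∂P = ∫ ω, x i ω ^ (2:ℝ) ∂P :=
      integral_congr_ae (ae_of_all _ fun ω => (hr2 (x i ω)).symm)
    rw [h1, hval, show θ + 2 = (θ + 1) + 1 by ring,
      Real.Gamma_add_one (by positivity), Real.Gamma_add_one (by positivity)]
    field_simp
  have hExg : ∀ i, Integrable (fun ω => x i ω ^ g) P ∧ ∫ ω, x i ω ^ g ∂P = M :=
    fun i => transfer i g (by linarith)
  -- expectations involving u
  have hu_int : ∀ i, Integrable (u i) P := fun i => (hu_sqint i).integrable one_le_two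
  have hxint : ∀ i, Integrable (x i) P := fun i => (hx2 i).integrable one_le_two
  have hExu : ∀ i j, ∫ ω, x i ω * u j ω ∂P = 0 := by
    intro i j
    have hint : Integrable (x i * u j) P := mul_L2_integrable (hx2 i) (hu_sqint j)
    have h1 : P[x i * u j | mX] =ᵐ[P] x i * P[u j | mX] :=
      condExp_mul_of_stronglyMeasurable_left (hxmX i) hint (hu_int j)
    have h2 : P[x i * u j | mX] =ᵐ[P] (0 : Ω → ℝ) := by
      refine h1.trans ?_
      filter_upwards [hu_cond j] with ω hω
      simp [hω]
    calc ∫ ω, x i ω * u j ω ∂P = ∫ ω, (P[x i * u j | mX]) ω ∂P :=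
          (integral_condExp hm).symm
      _ = 0 := by rw [integral_congr_ae h2]; simp
  have hEuu : ∀ i j, i ≠ j → ∫ ω, u i ω * u j ω ∂P = 0 := by
    intro i j hij
    have hint : Integrable (fun ω => u i ω * u j ω) P :=
      mul_L2_integrable (hu_sqint i) (hu_sqint j)
    calc ∫ ω, u i ω * u j ω ∂P = ∫ ω, (P[fun ω => u i ω * u j ω | mX]) ω ∂P :=
          (integral_condExp hm).symm
      _ = 0 := by rw [integral_congr_ae (hu_cross i j hij)]; simp
  have hEu2 : ∀ i, ∫ ω, u i ω ^ 2 ∂P = δ * M := by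
    intro i
    have hint : Integrable (fun ω => u i ω ^ 2) P := (hu_sqint i).integrable_sq
    calc ∫ ω, u i ω ^ 2 ∂P = ∫ ω, (P[fun ω => u i ω ^ 2 | mX]) ω ∂P :=
          (integral_condExp hm).symm
      _ = ∫ ω, δ * x i ω ^ g ∂P := integral_congr_ae (hu_var i)
      _ = δ * M := by rw [integral_const_mul, (hExg i).2]
  have hExx : ∀ i j, i ≠ j → ∫ ω, x i ω * x j ω ∂P = θ * θ := by
    intro i j hij
    have h := IndepFun.integral_fun_mul_eq_mul_integral (hindep.indepFun hij) (hxint i).aestronglyMeasurable (hxint j).aestronglyMeasurable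
    calc ∫ ω, x i ω * x j ω ∂P = (∫ ω, x i ω ∂P) * ∫ ω, x j ω ∂P := h
      _ = θ * θ := by rw [hEx i, hEx j]
  -- the coefficients and residual variables
  set c : Fin N → ℝ := fun i => (if i ∈ s then (n:ℝ)⁻¹ else 0) - (N:ℝ)⁻¹ with hc
  set v : Fin N → Ω → ℝ := fun i ω => β * x i ω + u i ω with hv
  have hn0 : (n:ℝ) ≠ 0 := Nat.cast_ne_zero.mpr (by omega)
  have hN0 : (N:ℝ) ≠ 0 := Nat.cast_ne_zero.mpr (by omega)
  have hcsum : ∑ i, c i = 0 := by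
    simp only [hc, Finset.sum_sub_distrib, Finset.sum_ite_mem, Finset.univ_inter,
      Finset.sum_const, hs, nsmul_eq_mul, Finset.card_univ, Fintype.card_fin]
    field_simp
    ring
  have hvL2 : ∀ i, MemLp (v i) 2 P := fun i => ((hx2 i).const_mul β).add (hu_sqint i)
  -- second moments of v
  have hA : ∀ i j, ∫ ω, v i ω * v j ω ∂P
      = β ^ 2 * (θ * θ) + (if i = j then β ^ 2 * θ + δ * M else 0) := by
    intro i j
    have e : ∀ ω, v i ω * v j ω
        = β ^ 2 * (x i ω * x j ω) + (β * (x i ω * u j ω)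
          + (β * (x j ω * u i ω) + u i ω * u j ω)) := by
      intro ω; simp only [hv]; ring
    have int1 : Integrable (fun ω => β ^ 2 * (x i ω * x j ω)) P :=
      (mul_L2_integrable (hx2 i) (hx2 j)).const_mul _
    have int2 : Integrable (fun ω => β * (x i ω * u j ω)) P :=
      (mul_L2_integrable (hx2 i) (hu_sqint j)).const_mul _
    have int3 : Integrable (fun ω => β * (x j ω * u i ω)) P :=
      (mul_L2_integrable (hx2 j) (hu_sqint i)).const_mul _
    have int4 : Integrable (fun ω => u i ω * u j ω) P :=
      mul_L2_integrable (hu_sqint i) (hu_sqint j)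
    have int34 : Integrable (fun ω => β * (x j ω * u i ω) + u i ω * u j ω) P :=
      int3.add int4
    have int234 : Integrable
        (fun ω => β * (x i ω * u j ω) + (β * (x j ω * u i ω) + u i ω * u j ω)) P :=
      int2.add int34
    rw [integral_congr_ae (ae_of_all _ e), integral_add int1 int234,
      integral_add int2 int34, integral_add int3 int4,
      integral_const_mul, integral_const_mul, integral_const_mul, hExu i j, hExu j i]
    by_cases hij : i = j
    · subst hij
      have hxx : ∫ ω, x i ω * x i ω ∂P = θ ^ 2 + θ := by
        rw [← hEx2 i]
        exact integral_congr_ae (ae_of_all _ fun ω => (pow_two (x i ω)).symm)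
      have huu : ∫ ω, u i ω * u i ω ∂P = δ * M := by
        rw [← hEu2 i]
        exact integral_congr_ae (ae_of_all _ fun ω => (pow_two (u i ω)).symm)
      rw [hxx, huu, if_pos rfl]
      ring
    · rw [hExx i j hij, hEuu i j hij, if_neg hij]
      ring
  -- pointwise rewriting of the estimator
  have hptw : ∀ ω, (∑ i ∈ s, y i ω) / n - (∑ i, y i ω) / N = ∑ i, c i * v i ω := by
    intro ω
    have h1 : ∑ i, c i * y i ω = (∑ i ∈ s, y i ω) / n - (∑ i, y i ω) / N := by
      simp only [hc, sub_mul, Finset.sum_sub_distrib, ite_mul, zero_mul,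
        Finset.sum_ite_mem, Finset.univ_inter]
      rw [← Finset.mul_sum, ← Finset.mul_sum]
      rw [inv_mul_eq_div, inv_mul_eq_div]
    have h2 : ∑ i, c i * y i ω = ∑ i, c i * v i ω := by
      have : ∀ i, c i * y i ω = c i * α + c i * v i ω := by
        intro i; rw [hy i ω, hv]; ring
      rw [Finset.sum_congr rfl fun i _ => this i, Finset.sum_add_distrib,
        ← Finset.sum_mul, hcsum, zero_mul, zero_add]
    rw [← h1, h2]
  -- expanding the square of the sum
  have key : ∫ ω, (∑ i, c i * v i ω) ^ 2 ∂P
      = ∑ i, ∑ j, c i * c j * ∫ ω, v i ω * v j ω ∂P := by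
    have hsq : ∀ ω, (∑ i, c i * v i ω) ^ 2
        = ∑ i, ∑ j, c i * c j * (v i ω * v j ω) := by
      intro ω
      rw [sq, Finset.sum_mul_sum]
      exact Finset.sum_congr rfl fun i _ => Finset.sum_congr rfl fun j _ => by ring
    have hintij : ∀ (i j : Fin N), Integrable (fun ω => c i * c j * (v i ω * v j ω)) P :=
      fun i j => (mul_L2_integrable (hvL2 i) (hvL2 j)).const_mul _
    rw [integral_congr_ae (ae_of_all _ hsq),
      integral_finset_sum _ fun i _ => integrable_finset_sum _ fun j _ => hintij i j]
    refine Finset.sum_congr rfl fun i _ => ?_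
    rw [integral_finset_sum _ fun j _ => hintij i j]
    exact Finset.sum_congr rfl fun j _ => integral_const_mul _ _
  -- evaluating the double sum
  have hdbl : ∑ i, ∑ j, c i * c j * ∫ ω, v i ω * v j ω ∂P
      = (∑ i, c i ^ 2) * (β ^ 2 * θ + δ * M) := by
    have hrow : ∀ i : Fin N, ∑ j, c i * c j * ∫ ω, v i ω * v j ω ∂P
        = c i ^ 2 * (β ^ 2 * θ + δ * M) := by
      intro i
      have h1 : ∀ j : Fin N, c i * c j * ∫ ω, v i ω * v j ω ∂P
          = c i * c j * (β ^ 2 * (θ * θ))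
            + (if i = j then c i * c j * (β ^ 2 * θ + δ * M) else 0) := by
        intro j
        rw [hA i j]
        by_cases hij : i = j
        · rw [if_pos hij, if_pos hij]; ring
        · rw [if_neg hij, if_neg hij]; ring
      rw [Finset.sum_congr rfl fun j _ => h1 j, Finset.sum_add_distrib]
      have h2 : ∑ j, c i * c j * (β ^ 2 * (θ * θ)) = 0 := by
        have : ∑ j, c i * c j * (β ^ 2 * (θ * θ))
            = c i * (β ^ 2 * (θ * θ)) * ∑ j, c j := by
          rw [Finset.mul_sum]
          exact Finset.sum_congr rfl fun j _ => by ring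
        rw [this, hcsum, mul_zero]
      rw [h2, zero_add, Finset.sum_ite_eq, if_pos (Finset.mem_univ i)]
      ring
    rw [Finset.sum_congr rfl fun i _ => hrow i, ← Finset.sum_mul]
  -- the sum of squared coefficients
  have hcsq : ∑ i, c i ^ 2 = ((N:ℝ) - n) / (n * N) := by
    have h1 : ∀ i : Fin N, c i ^ 2
        = if i ∈ s then ((n:ℝ)⁻¹ - (N:ℝ)⁻¹) ^ 2 else ((N:ℝ)⁻¹) ^ 2 := by
      intro i
      by_cases hi : i ∈ s
      · simp [hc, hi]
      · simp [hc, hi]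
    rw [Finset.sum_congr rfl fun i _ => h1 i, Finset.sum_ite, Finset.sum_const,
      Finset.sum_const]
    have h2 : Finset.univ.filter (fun i => i ∈ s) = s := by
      ext i; simp
    have h3 : (Finset.univ.filter (fun i => ¬ i ∈ s)).card = N - n := by
      have : Finset.univ.filter (fun i => ¬ i ∈ s) = sᶜ := by
        ext i; simp
      rw [this, Finset.card_compl, hs, Fintype.card_fin]
    rw [h2, h3, hs, nsmul_eq_mul, nsmul_eq_mul]
    have hcast : ((N - n : ℕ) : ℝ) = (N:ℝ) - n := by
      push_cast [Nat.cast_sub hnN.le]; ring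
    rw [hcast]
    field_simp
    ring
  -- putting everything together
  calc ∫ ω, ((∑ i ∈ s, y i ω) / n - (∑ i, y i ω) / N) ^ 2 ∂P
      = ∫ ω, (∑ i, c i * v i ω) ^ 2 ∂P :=
        integral_congr_ae (ae_of_all _ fun ω => by simp only [hptw ω])
    _ = ∑ i, ∑ j, c i * c j * ∫ ω, v i ω * v j ω ∂P := key
    _ = (∑ i, c i ^ 2) * (β ^ 2 * θ + δ * M) := hdbl
    _ = ((N:ℝ) - n) * (β ^ 2 * θ + δ * Real.Gamma (θ + g) / Real.Gamma θ) / (n * N) := by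
        rw [hcsq, hM]
        ring
end

section
/- Let N > n ≥ 1 be integers and θ > 0 a real number with nθ > 2, and let x_1,…,x_N be i.i.d. Gamma(θ,1) random variables. Then ((Σ_{i=1}^N x_i)/(Σ_{i=1}^n x_i))² is integrable and E[((Σ_{i=1}^N x_i)/(Σ_{i=1}^n x_i))²] = 1 + 2(N − n)θ/(nθ − 1) + (N − n)θ((N − n)θ + 1)/((nθ − 1)(nθ − 2)). -/
open MeasureTheory ProbabilityTheory

open Real Set Filter Topology ENNReal


namespace GammaAux
variable {θ : ℝ}

lemma hasDeriv_pow_shift {a : ℝ} (ha : 1 < a) {t : ℝ} (ht : -1 < t) :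
    HasDerivAt (fun u : ℝ => -(1 + u) ^ (1 - a) / (a - 1)) ((1 + t) ^ (-a)) t := by
  have h1 : (0:ℝ) < 1 + t := by linarith
  have h := ((Real.hasDerivAt_rpow_const (x := 1 + t) (p := 1 - a) (Or.inl h1.ne'))).comp t
    ((hasDerivAt_id t).const_add 1)
  have h2 := (h.const_mul (-(a - 1)⁻¹))
  refine (h2.congr_deriv ?_).congr_of_eventuallyEq (Filter.Eventually.of_forall fun u => ?_)
  · rw [show (1:ℝ) - a - 1 = -a by ring]
    have hc : a - 1 ≠ 0 := by linarith
    field_simp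
    ring
  · simp only [Function.comp]
    ring

lemma tendsto_pow_shift {a : ℝ} (ha : 1 < a) :
    Tendsto (fun u : ℝ => -(1 + u) ^ (1 - a) / (a - 1)) atTop (𝓝 0) := by
  have h1 : Tendsto (fun u : ℝ => 1 + u) atTop atTop := tendsto_atTop_add_const_left _ 1 tendsto_id
  have h2 : Tendsto (fun v : ℝ => v ^ (-(a - 1))) atTop (𝓝 0) :=
    tendsto_rpow_neg_atTop (by linarith)
  have h3 : Tendsto (fun u : ℝ => (1 + u) ^ (1 - a)) atTop (𝓝 0) := by
    have := h2.comp h1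
    simpa [Function.comp_def, show -(a-1) = 1-a by ring] using this
  have := (h3.neg).div_const (a - 1)
  simpa using this

lemma integrableOn_J {a : ℝ} (ha : 1 < a) :
    IntegrableOn (fun t : ℝ => (1 + t) ^ (-a)) (Ioi 0) := by
  refine integrableOn_Ioi_deriv_of_nonneg ?_
    (fun t ht => hasDeriv_pow_shift ha (by simp only [mem_Ioi] at ht; linarith))
    (fun t ht => Real.rpow_nonneg (by simp only [mem_Ioi] at ht; linarith) _)
    (tendsto_pow_shift ha)
  exact ((hasDeriv_pow_shift ha (by norm_num : (-1:ℝ) < 0)).continuousAt).continuousWithinAt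

lemma integral_J {a : ℝ} (ha : 1 < a) :
    ∫ t in Ioi (0:ℝ), (1 + t) ^ (-a) = 1 / (a - 1) := by
  rw [integral_Ioi_of_hasDerivAt_of_nonneg
    ((hasDeriv_pow_shift ha (by norm_num : (-1:ℝ) < 0)).continuousAt.continuousWithinAt)
    (fun t ht => hasDeriv_pow_shift ha (by simp only [mem_Ioi] at ht; linarith))
    (fun t ht => Real.rpow_nonneg (by simp only [mem_Ioi] at ht; linarith) _)
    (tendsto_pow_shift ha)]
  norm_num [Real.one_rpow]
  field_simp

lemma measurable_gammaPDF (a r : ℝ) : Measurable (gammaPDF a r) :=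
  (measurable_gammaPDFReal a r).ennreal_ofReal

lemma gamma_pos_ae {θ : ℝ} : ∀ᵐ y ∂(gammaMeasure θ 1), 0 < y := by
  rw [ae_iff]
  have h : {y : ℝ | ¬ 0 < y} = Iic 0 := by ext y; simp
  rw [h, gammaMeasure, withDensity_apply _ measurableSet_Iic]
  have h2 : volume.restrict (Iic (0:ℝ)) = volume.restrict (Iio 0) := by
    rw [← restrict_Iio_eq_restrict_Iic]
  rw [h2]
  rw [setLIntegral_congr_fun measurableSet_Iio
    (fun y (hy : y < 0) => gammaPDF_of_neg hy)]
  simp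

/-- Master integral against the Gamma(θ,1) measure. -/
lemma gamma_lint {θ : ℝ} (hθ : 0 < θ) {q c : ℝ} (hq : 0 < θ + q) (hc : 0 ≤ c) :
    ∫⁻ y, ENNReal.ofReal (y ^ q * exp (-(c * y))) ∂(gammaMeasure θ 1)
      = ENNReal.ofReal ((1 + c) ^ (-(θ + q)) * Gamma (θ + q) / Gamma θ) := by
  have hmg : Measurable fun y : ℝ => ENNReal.ofReal (y ^ q * exp (-(c * y))) := by
    fun_prop
  rw [gammaMeasure, lintegral_withDensity_eq_lintegral_mul _ (measurable_gammaPDF θ 1) hmg]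
  have hsplit : ∀ f : ℝ → ℝ≥0∞, Measurable f → (∀ y < 0, f y = 0) →
      ∫⁻ y, f y = ∫⁻ y in Ioi 0, f y := by
    intro f hf h0
    rw [← lintegral_add_compl f (measurableSet_Ioi (a := (0:ℝ)))]
    have : ∫⁻ y in (Ioi (0:ℝ))ᶜ, f y = 0 := by
      rw [compl_Ioi]
      rw [show volume.restrict (Iic (0:ℝ)) = volume.restrict (Iio 0) by
        rw [← restrict_Iio_eq_restrict_Iic]]
      rw [setLIntegral_congr_fun measurableSet_Iio (fun y hy => h0 y hy)]
      simp
    rw [this, add_zero]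
  simp only [Pi.mul_apply]
  rw [hsplit (fun y => gammaPDF θ 1 y * ENNReal.ofReal (y ^ q * exp (-(c * y))))
    ((measurable_gammaPDF θ 1).mul hmg) (fun y hy => by simp [gammaPDF_of_neg hy])]
  have hcongr : ∀ y ∈ Ioi (0:ℝ), gammaPDF θ 1 y * ENNReal.ofReal (y ^ q * exp (-(c * y)))
      = ENNReal.ofReal ((1 / Gamma θ) * (y ^ ((θ + q) - 1) * exp (-((1 + c) * y)))) := by
    intro y hy
    have hy0 : (0:ℝ) < y := hy
    simp only [gammaPDF_of_nonneg hy0.le]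
    rw [← ENNReal.ofReal_mul (by positivity)]
    congr 1
    rw [Real.one_rpow]
    rw [show 1 / Gamma θ * y ^ (θ - 1) * exp (-(1 * y)) * (y ^ q * exp (-(c * y)))
        = (1 / Gamma θ) * ((y ^ (θ - 1) * y ^ q) * (exp (-(1 * y)) * exp (-(c * y)))) by ring,
      ← Real.rpow_add hy0, ← Real.exp_add, show θ - 1 + q = θ + q - 1 by ring,
      show -(1 * y) + -(c * y) = -((1 + c) * y) by ring]
  rw [setLIntegral_congr_fun measurableSet_Ioi hcongr]
  have hint : IntegrableOn (fun y : ℝ => y ^ ((θ + q) - 1) * exp (-((1 + c) * y))) (Ioi 0) := by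
    have := integrableOn_rpow_mul_exp_neg_mul_rpow (p := 1) (s := (θ + q) - 1) (b := 1 + c)
      (by linarith) one_pos (by linarith)
    refine this.congr_fun (fun y hy => ?_) measurableSet_Ioi
    simp only [Real.rpow_one]; ring_nf
  have hint2 : IntegrableOn
      (fun y : ℝ => (1 / Gamma θ) * (y ^ ((θ + q) - 1) * exp (-((1 + c) * y)))) (Ioi 0) :=
    hint.const_mul _
  rw [← ofReal_integral_eq_lintegral_ofReal hint2 ((ae_restrict_iff' measurableSet_Ioi).mpr
    (ae_of_all _ (fun y (hy : 0 < y) => by positivity)))]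
  rw [MeasureTheory.integral_const_mul, integral_rpow_mul_exp_neg_mul_Ioi hq (by linarith)]
  congr 1
  rw [one_div (1 + c), ← Real.rpow_neg_one, ← Real.rpow_mul (by linarith : (0:ℝ) ≤ 1 + c),
    show (-1) * (θ + q) = -(θ + q) by ring]
  ring


lemma gamma_exp (hθ : 0 < θ) {c : ℝ} (hc : 0 ≤ c) :
    ∫⁻ y, ENNReal.ofReal (exp (-(c * y))) ∂(gammaMeasure θ 1)
      = ENNReal.ofReal ((1 + c) ^ (-θ)) := by
  have := gamma_lint hθ (q := 0) (by linarith) hc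
  simp only [Real.rpow_zero, one_mul, add_zero] at this
  rw [this, mul_div_assoc, div_self (Real.Gamma_pos_of_pos hθ).ne', mul_one]

lemma gamma_m1 (hθ : 0 < θ) :
    ∫⁻ y, ENNReal.ofReal y ∂(gammaMeasure θ 1) = ENNReal.ofReal θ := by
  have := gamma_lint hθ (q := 1) (c := 0) (by linarith) le_rfl
  simp only [Real.rpow_one, zero_mul, neg_zero, Real.exp_zero, mul_one, add_zero,
    Real.one_rpow, one_mul] at this
  rw [this, Real.Gamma_add_one hθ.ne', mul_div_assoc,
    div_self (Real.Gamma_pos_of_pos hθ).ne', mul_one]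

lemma gamma_m2 (hθ : 0 < θ) :
    ∫⁻ y, (ENNReal.ofReal y) ^ 2 ∂(gammaMeasure θ 1) = ENNReal.ofReal (θ * (θ + 1)) := by
  have h := gamma_lint hθ (q := 2) (c := 0) (by linarith) le_rfl
  simp only [zero_mul, neg_zero, Real.exp_zero, mul_one, Real.one_rpow, one_mul] at h
  have hcongr : ∫⁻ y, (ENNReal.ofReal y) ^ 2 ∂(gammaMeasure θ 1)
      = ∫⁻ y, ENNReal.ofReal (y ^ (2:ℝ)) ∂(gammaMeasure θ 1) := by
    refine lintegral_congr_ae (gamma_pos_ae.mono (fun y hy => ?_))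
    simp only
    rw [show y ^ (2:ℝ) = y ^ (2:ℕ) by rw [← Real.rpow_natCast]; norm_num, ENNReal.ofReal_pow hy.le]
  rw [hcongr, h]
  have h2 : Real.Gamma (θ + 2) = (θ + 1) * θ * Real.Gamma θ := by
    rw [show θ + 2 = (θ + 1) + 1 by ring, Real.Gamma_add_one (by linarith),
      Real.Gamma_add_one hθ.ne']
    ring
  rw [h2]
  congr 1
  field_simp [(Real.Gamma_pos_of_pos hθ).ne']
  ring
  exact Real.one_rpow _

lemma lap1 {y : ℝ} (hy : 0 < y) :
    ∫⁻ t in Ioi (0:ℝ), ENNReal.ofReal (exp (-(t * y))) = (ENNReal.ofReal y)⁻¹ := by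
  have hint : IntegrableOn (fun t : ℝ => exp (-(y * t))) (Ioi 0) := by
    have := exp_neg_integrableOn_Ioi 0 hy
    exact this.congr_fun (fun t _ => by simp only [neg_mul]) measurableSet_Ioi
  have hval : ∫ t in Ioi (0:ℝ), exp (-(y * t)) = 1 / y := by
    have := integral_rpow_mul_exp_neg_mul_Ioi (a := 1) (r := y) one_pos hy
    simp only [sub_self, Real.rpow_zero, one_mul, Real.rpow_one, Real.Gamma_one, mul_one] at this
    rw [← this]
  have := ofReal_integral_eq_lintegral_ofReal hint
    (ae_of_all _ (fun t => (Real.exp_pos _).le))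
  rw [← ENNReal.ofReal_inv_of_pos hy]
  have hc : ∀ t : ℝ, ENNReal.ofReal (exp (-(t * y))) = ENNReal.ofReal (exp (-(y * t))) := by
    intro t; rw [mul_comm]
  simp_rw [hc]
  rw [← this, hval, one_div]

lemma lap2 {y : ℝ} (hy : 0 < y) :
    ∫⁻ t in Ioi (0:ℝ), ENNReal.ofReal (t * exp (-(t * y))) = ((ENNReal.ofReal y) ^ 2)⁻¹ := by
  have hint : IntegrableOn (fun t : ℝ => t * exp (-(y * t))) (Ioi 0) := by
    have := integrableOn_rpow_mul_exp_neg_mul_rpow (p := 1) (s := 1) (b := y)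
      (by norm_num) one_pos hy
    exact this.congr_fun (fun t ht => by simp only [Real.rpow_one, neg_mul]) measurableSet_Ioi
  have hval : ∫ t in Ioi (0:ℝ), t * exp (-(y * t)) = 1 / y ^ 2 := by
    have := integral_rpow_mul_exp_neg_mul_Ioi (a := 2) (r := y) two_pos hy
    have h2 : ∀ t ∈ Ioi (0:ℝ), t ^ ((2:ℝ) - 1) * exp (-(y * t)) = t * exp (-(y * t)) := by
      intro t ht; norm_num
    rw [setIntegral_congr_fun measurableSet_Ioi h2] at this
    rw [this, Real.Gamma_two, mul_one, div_rpow zero_le_one hy.le, Real.one_rpow,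
      show (2:ℝ) = ((2:ℕ):ℝ) by norm_num, Real.rpow_natCast]
  have := ofReal_integral_eq_lintegral_ofReal hint
    ((ae_restrict_iff' measurableSet_Ioi).mpr (ae_of_all _ (fun t (ht : 0 < t) => by positivity)))
  have hc : ∀ t : ℝ, ENNReal.ofReal (t * exp (-(t * y))) = ENNReal.ofReal (t * exp (-(y * t))) := by
    intro t; rw [mul_comm t y]
  simp_rw [hc]
  rw [← this, hval, one_div, ENNReal.ofReal_inv_of_pos (by positivity),
    ENNReal.ofReal_pow hy.le]


lemma lintegral_J1 {a : ℝ} (ha : 1 < a) :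
    ∫⁻ t in Ioi (0:ℝ), ENNReal.ofReal ((1 + t) ^ (-a)) = ENNReal.ofReal (1 / (a - 1)) := by
  rw [← ofReal_integral_eq_lintegral_ofReal (integrableOn_J ha)
    ((ae_restrict_iff' measurableSet_Ioi).mpr (ae_of_all _ (fun t (ht : 0 < t) => by positivity))),
    integral_J ha]

lemma key_sub {a t : ℝ} (ht : 0 < t) :
    t * (1 + t) ^ (-a) = (1 + t) ^ (-(a - 1)) - (1 + t) ^ (-a) := by
  have h1 : (0:ℝ) < 1 + t := by linarith
  have : (1 + t) ^ (-(a - 1)) = (1 + t) * (1 + t) ^ (-a) := by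
    rw [show -(a - 1) = 1 + (-a) by ring, Real.rpow_add h1, Real.rpow_one]
  rw [this]; ring

lemma integrableOn_J2 {a : ℝ} (ha : 2 < a) :
    IntegrableOn (fun t : ℝ => t * (1 + t) ^ (-a)) (Ioi 0) := by
  have h := (integrableOn_J (a := a - 1) (by linarith)).sub
    (integrableOn_J (by linarith : (1:ℝ) < a))
  refine IntegrableOn.congr_fun h (fun t ht => ?_) measurableSet_Ioi
  simp only [Pi.sub_apply]
  exact (key_sub ht).symm

lemma lintegral_J2 {a : ℝ} (ha : 2 < a) :
    ∫⁻ t in Ioi (0:ℝ), ENNReal.ofReal (t * (1 + t) ^ (-a))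
      = ENNReal.ofReal (1 / ((a - 1) * (a - 2))) := by
  rw [← ofReal_integral_eq_lintegral_ofReal (integrableOn_J2 ha)
    ((ae_restrict_iff' measurableSet_Ioi).mpr (ae_of_all _ (fun t (ht : 0 < t) => by positivity)))]
  congr 1
  rw [setIntegral_congr_fun measurableSet_Ioi (fun t (ht : 0 < t) => key_sub ht),
    integral_sub (integrableOn_J (by linarith : (1:ℝ) < a - 1)) (integrableOn_J (by linarith)),
    integral_J (by linarith : (1:ℝ) < a - 1), integral_J (by linarith : (1:ℝ) < a)]
  have h1 : a - 1 - 1 = a - 2 := by ring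
  rw [h1]
  have h2 : a - 1 ≠ 0 := by linarith
  have h3 : a - 2 ≠ 0 := by linarith
  field_simp
  ring

end GammaAux


open GammaAux

set_option maxHeartbeats 2000000

/-- For i.i.d. `Gamma(θ,1)` variables `x_1, …, x_N` and `nθ > 2`, the square of the
ratio of the population total to the total of the first `n` variables is integrable
with expectation `1 + 2(N-n)θ/(nθ-1) + (N-n)θ((N-n)θ+1)/((nθ-1)(nθ-2))`. -/
theorem gamma_total_ratio_second_moment
    {Ω : Type*} [MeasurableSpace Ω] (P : Measure Ω) [IsProbabilityMeasure P]
    (N n : ℕ) (hn : 1 ≤ n) (hnN : n < N) (θ : ℝ) (hθ : 0 < θ) (hnθ : 2 < n * θ)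
    (x : Fin N → Ω → ℝ) (hxmeas : ∀ i, Measurable (x i))
    (hindep : iIndepFun x P)
    (hxdist : ∀ i, P.map (x i) = gammaMeasure θ 1) :
    Integrable
      (fun ω =>
        ((∑ i, x i ω) / (∑ i ∈ Finset.univ.filter (fun i : Fin N => (i : ℕ) < n), x i ω)) ^ 2)
      P ∧
    ∫ ω, ((∑ i, x i ω) / (∑ i ∈ Finset.univ.filter (fun i : Fin N => (i : ℕ) < n), x i ω)) ^ 2 ∂P
      = 1 + 2 * ((N : ℝ) - n) * θ / (n * θ - 1)
        + ((N : ℝ) - n) * θ * (((N : ℝ) - n) * θ + 1) / ((n * θ - 1) * (n * θ - 2)) := by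
  classical
  set s : Finset (Fin N) := Finset.univ.filter (fun i : Fin N => (i : ℕ) < n) with hs_def
  set sc : Finset (Fin N) := Finset.univ.filter (fun i : Fin N => ¬ ((i : ℕ) < n)) with hsc_def
  have hsc_compl : sc = sᶜ := by
    rw [hs_def, hsc_def, Finset.compl_filter]
  have hdisj : Disjoint sc s := by
    rw [hsc_compl]; exact disjoint_compl_left
  have hcard_s : s.card = n := by
    rw [hs_def, Finset.card_filter, Fin.sum_univ_eq_sum_range (fun i => if i < n then 1 else 0),
      ← Finset.card_filter]
    have : (Finset.range N).filter (fun i => i < n) = Finset.range n := by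
      ext i; simp; omega
    rw [this, Finset.card_range]
  have hcard_sc : sc.card = N - n := by
    rw [hsc_compl, Finset.card_compl, hcard_s, Fintype.card_fin]
  have hmcast : ((N - n : ℕ) : ℝ) = (N : ℝ) - n := by
    rw [Nat.cast_sub hnN.le]
  -- the sums
  set S : Ω → ℝ := ∑ i ∈ s, x i with hS_def
  set T : Ω → ℝ := ∑ i ∈ sc, x i with hT_def
  have hS_apply : ∀ ω, S ω = ∑ i ∈ s, x i ω := fun ω => by
    rw [hS_def, Finset.sum_apply]
  have hT_apply : ∀ ω, T ω = ∑ i ∈ sc, x i ω := fun ω => by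
    rw [hT_def, Finset.sum_apply]
  have hSmeas : Measurable S := by
    rw [hS_def]
    have := Finset.measurable_sum (f := x) s (fun i _ => hxmeas i)
    convert this using 1
    funext ω; rw [Finset.sum_apply]
  have hTmeas : Measurable T := by
    rw [hT_def]
    have := Finset.measurable_sum (f := x) sc (fun i _ => hxmeas i)
    convert this using 1
    funext ω; rw [Finset.sum_apply]
  -- a.e. positivity
  have hpos : ∀ᵐ ω ∂P, ∀ i, 0 < x i ω := by
    rw [ae_all_iff]
    intro i
    have h1 : ∀ᵐ y ∂(P.map (x i)), 0 < y := by rw [hxdist i]; exact gamma_pos_ae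
    exact (ae_map_iff (hxmeas i).aemeasurable (measurableSet_Ioi (a := (0:ℝ)))).mp h1
  have hSpos : ∀ᵐ ω ∂P, 0 < S ω := by
    filter_upwards [hpos] with ω hω
    rw [hS_apply]
    refine Finset.sum_pos (fun i _ => hω i) ⟨⟨0, by omega⟩, ?_⟩
    simp only [hs_def, Finset.mem_filter, Finset.mem_univ, true_and]
    exact hn
  have hTpos : ∀ᵐ ω ∂P, 0 ≤ T ω := by
    filter_upwards [hpos] with ω hω
    rw [hT_apply]
    exact Finset.sum_nonneg (fun i _ => (hω i).le)
  -- lintegral transfer to gamma measure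
  have hmapl : ∀ (i : Fin N) (g : ℝ → ℝ≥0∞), Measurable g →
      ∫⁻ ω, g (x i ω) ∂P = ∫⁻ y, g y ∂(gammaMeasure θ 1) := by
    intro i g hg
    rw [← hxdist i, lintegral_map hg (hxmeas i)]
  -- mgf of each coordinate
  have hmgf_i : ∀ (i : Fin N) (c : ℝ), 0 ≤ c → mgf (x i) P (-c) = (1 + c) ^ (-θ) := by
    intro i c hc
    have hmeq : mgf (x i) P (-c) = ∫ ω, exp (-c * x i ω) ∂P := rfl
    have hcont : Continuous fun y : ℝ => exp (-c * y) := by fun_prop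
    have hmap : ∫ ω, exp (-c * x i ω) ∂P = ∫ y, exp (-c * y) ∂(gammaMeasure θ 1) := by
      rw [← hxdist i]
      exact (integral_map (hxmeas i).aemeasurable hcont.aestronglyMeasurable).symm
    rw [hmeq, hmap, integral_eq_lintegral_of_nonneg_ae
      (ae_of_all _ (fun y => (Real.exp_pos _).le)) hcont.aestronglyMeasurable]
    have : ∀ y : ℝ, ENNReal.ofReal (exp (-c * y)) = ENNReal.ofReal (exp (-(c * y))) := by
      intro y; rw [neg_mul]
    simp_rw [this]
    rw [gamma_exp hθ hc, ENNReal.toReal_ofReal (Real.rpow_nonneg (by linarith) _)]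
  -- mgf of S
  have hmgf_S : ∀ c : ℝ, 0 ≤ c → mgf S P (-c) = (1 + c) ^ (-((n : ℝ) * θ)) := by
    intro c hc
    rw [hS_def, hindep.mgf_sum hxmeas s]
    have : ∀ i ∈ s, mgf (x i) P (-c) = (1 + c) ^ (-θ) := fun i _ => hmgf_i i c hc
    rw [Finset.prod_congr rfl this, Finset.prod_const, hcard_s,
      ← Real.rpow_natCast ((1 + c) ^ (-θ)) n, ← Real.rpow_mul (by linarith)]
    congr 1
    ring
  -- Laplace transform of S
  have hExpS : ∀ c : ℝ, 0 ≤ c →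
      ∫⁻ ω, ENNReal.ofReal (exp (-(c * S ω))) ∂P
        = ENNReal.ofReal ((1 + c) ^ (-((n : ℝ) * θ))) := by
    intro c hc
    have hconm : Measurable fun ω => exp (-(c * S ω)) := by fun_prop
    have hint : Integrable (fun ω => exp (-(c * S ω))) P := by
      refine Integrable.mono' (integrable_const (1:ℝ)) hconm.aestronglyMeasurable ?_
      filter_upwards [hSpos] with ω hω
      rw [Real.norm_eq_abs, abs_of_pos (Real.exp_pos _)]
      exact Real.exp_le_one_iff.mpr (by nlinarith)
    rw [← ofReal_integral_eq_lintegral_ofReal hint (ae_of_all _ (fun ω => (Real.exp_pos _).le))]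
    have : ∫ ω, exp (-(c * S ω)) ∂P = mgf S P (-c) := by
      simp only [mgf, neg_mul]
    rw [this, hmgf_S c hc]
  -- the two negative moments of S
  have hC : ∫⁻ ω, (ENNReal.ofReal (S ω))⁻¹ ∂P = ENNReal.ofReal (1 / ((n : ℝ) * θ - 1)) := by
    have h1 : ∫⁻ ω, (ENNReal.ofReal (S ω))⁻¹ ∂P
        = ∫⁻ ω, (∫⁻ t in Ioi (0:ℝ), ENNReal.ofReal (exp (-(t * S ω)))) ∂P :=
      lintegral_congr_ae (hSpos.mono (fun ω hω => (lap1 hω).symm))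
    rw [h1, lintegral_lintegral_swap (by fun_prop)]
    rw [setLIntegral_congr_fun measurableSet_Ioi
      (fun t (ht : 0 < t) => hExpS t ht.le)]
    exact lintegral_J1 (by linarith)
  have hD : ∫⁻ ω, ((ENNReal.ofReal (S ω)) ^ 2)⁻¹ ∂P
      = ENNReal.ofReal (1 / (((n : ℝ) * θ - 1) * ((n : ℝ) * θ - 2))) := by
    have h1 : ∫⁻ ω, ((ENNReal.ofReal (S ω)) ^ 2)⁻¹ ∂P
        = ∫⁻ ω, (∫⁻ t in Ioi (0:ℝ), ENNReal.ofReal (t * exp (-(t * S ω)))) ∂P :=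
      lintegral_congr_ae (hSpos.mono (fun ω hω => (lap2 hω).symm))
    rw [h1, lintegral_lintegral_swap (by fun_prop)]
    have h2 : ∀ t ∈ Ioi (0:ℝ), ∫⁻ ω, ENNReal.ofReal (t * exp (-(t * S ω))) ∂P
        = ENNReal.ofReal (t * (1 + t) ^ (-((n : ℝ) * θ))) := by
      intro t ht
      have ht' : (0:ℝ) < t := ht
      calc ∫⁻ ω, ENNReal.ofReal (t * exp (-(t * S ω))) ∂P
          = ∫⁻ ω, ENNReal.ofReal t * ENNReal.ofReal (exp (-(t * S ω))) ∂P := by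
            congr 1; funext ω; rw [ENNReal.ofReal_mul ht'.le]
        _ = ENNReal.ofReal t * ∫⁻ ω, ENNReal.ofReal (exp (-(t * S ω))) ∂P :=
            lintegral_const_mul _ (by fun_prop)
        _ = ENNReal.ofReal t * ENNReal.ofReal ((1 + t) ^ (-((n : ℝ) * θ))) := by
            rw [hExpS t ht'.le]
        _ = ENNReal.ofReal (t * (1 + t) ^ (-((n : ℝ) * θ))) := by
            rw [← ENNReal.ofReal_mul ht'.le]
    rw [setLIntegral_congr_fun measurableSet_Ioi h2]
    exact lintegral_J2 (by linarith)
  -- first moment of T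
  have hxM1 : ∀ i : Fin N, ∫⁻ ω, ENNReal.ofReal (x i ω) ∂P = ENNReal.ofReal θ := by
    intro i
    rw [hmapl i _ ENNReal.measurable_ofReal, gamma_m1 hθ]
  have hA : ∫⁻ ω, ENNReal.ofReal (T ω) ∂P = ENNReal.ofReal (((N : ℝ) - n) * θ) := by
    have h1 : ∫⁻ ω, ENNReal.ofReal (T ω) ∂P
        = ∫⁻ ω, ∑ i ∈ sc, ENNReal.ofReal (x i ω) ∂P := by
      refine lintegral_congr_ae (hpos.mono (fun ω hω => ?_))
      show ENNReal.ofReal (T ω) = ∑ i ∈ sc, ENNReal.ofReal (x i ω)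
      rw [hT_apply, ENNReal.ofReal_sum_of_nonneg (fun i _ => (hω i).le)]
    rw [h1, lintegral_finset_sum sc (fun i _ => (hxmeas i).ennreal_ofReal)]
    rw [Finset.sum_congr rfl (fun i _ => hxM1 i), Finset.sum_const, hcard_sc,
      nsmul_eq_mul, ← ENNReal.ofReal_natCast (N - n), ← ENNReal.ofReal_mul (by positivity),
      hmcast]
  -- second moment of T
  have hxM2 : ∀ i : Fin N, ∫⁻ ω, (ENNReal.ofReal (x i ω)) ^ 2 ∂P
      = ENNReal.ofReal (θ * (θ + 1)) := by
    intro i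
    rw [hmapl i (fun y => (ENNReal.ofReal y) ^ 2) (by fun_prop), gamma_m2 hθ]
  have hEij : ∀ i j : Fin N, i ≠ j →
      ∫⁻ ω, ENNReal.ofReal (x i ω) * ENNReal.ofReal (x j ω) ∂P
        = ENNReal.ofReal θ * ENNReal.ofReal θ := by
    intro i j hij
    have hind : IndepFun (fun ω => ENNReal.ofReal (x i ω)) (fun ω => ENNReal.ofReal (x j ω)) P :=
      (hindep.indepFun hij).comp ENNReal.measurable_ofReal ENNReal.measurable_ofReal
    rw [lintegral_mul_eq_lintegral_mul_lintegral_of_indepFun''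
      ((hxmeas i).ennreal_ofReal.aemeasurable) ((hxmeas j).ennreal_ofReal.aemeasurable) hind,
      hxM1 i, hxM1 j]
  have hB : ∫⁻ ω, (ENNReal.ofReal (T ω)) ^ 2 ∂P
      = ENNReal.ofReal (((N : ℝ) - n) * θ * (((N : ℝ) - n) * θ + 1)) := by
    have h1 : ∫⁻ ω, (ENNReal.ofReal (T ω)) ^ 2 ∂P
        = ∫⁻ ω, ∑ i ∈ sc, ∑ j ∈ sc, ENNReal.ofReal (x i ω) * ENNReal.ofReal (x j ω) ∂P := by
      refine lintegral_congr_ae (hpos.mono (fun ω hω => ?_))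
      show (ENNReal.ofReal (T ω)) ^ 2
        = ∑ i ∈ sc, ∑ j ∈ sc, ENNReal.ofReal (x i ω) * ENNReal.ofReal (x j ω)
      rw [hT_apply, ENNReal.ofReal_sum_of_nonneg (fun i _ => (hω i).le), sq,
        Finset.sum_mul_sum]
    rw [h1, lintegral_finset_sum sc
      (f := fun i ω => ∑ j ∈ sc, ENNReal.ofReal (x i ω) * ENNReal.ofReal (x j ω)) (fun i _ => Finset.measurable_sum sc
      (fun j _ => ((hxmeas i).ennreal_ofReal.mul (hxmeas j).ennreal_ofReal :
        Measurable fun ω => ENNReal.ofReal (x i ω) * ENNReal.ofReal (x j ω))))]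
    have h2 : ∀ i ∈ sc, ∫⁻ ω, ∑ j ∈ sc, ENNReal.ofReal (x i ω) * ENNReal.ofReal (x j ω) ∂P
        = ENNReal.ofReal (θ * (θ + 1)) + (N - n - 1) • (ENNReal.ofReal θ * ENNReal.ofReal θ) := by
      intro i hi
      rw [lintegral_finset_sum sc
        (f := fun j ω => ENNReal.ofReal (x i ω) * ENNReal.ofReal (x j ω)) (fun j _ =>
        ((hxmeas i).ennreal_ofReal.mul (hxmeas j).ennreal_ofReal :
          Measurable fun ω => ENNReal.ofReal (x i ω) * ENNReal.ofReal (x j ω))),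
        ← Finset.add_sum_erase _ _ hi]
      congr 1
      · have : (fun ω => ENNReal.ofReal (x i ω) * ENNReal.ofReal (x i ω))
            = fun ω => (ENNReal.ofReal (x i ω)) ^ 2 := by
          funext ω; rw [sq]
        rw [this, hxM2 i]
      · rw [Finset.sum_congr rfl (fun j hj => hEij i j (Finset.ne_of_mem_erase hj).symm),
          Finset.sum_const, Finset.card_erase_of_mem hi, hcard_sc]
    rw [Finset.sum_congr rfl h2, Finset.sum_const, hcard_sc]
    -- arithmetic in ℝ≥0∞
    have hm1 : 1 ≤ N - n := by omega
    rw [nsmul_eq_mul, nsmul_eq_mul, ← ENNReal.ofReal_natCast (N - n),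
      ← ENNReal.ofReal_natCast (N - n - 1), ← ENNReal.ofReal_mul hθ.le,
      ← ENNReal.ofReal_mul (by positivity), ← ENNReal.ofReal_add (by positivity) (by positivity),
      ← ENNReal.ofReal_mul (by positivity)]
    congr 1
    have hc2 : ((N - n - 1 : ℕ) : ℝ) = (N : ℝ) - n - 1 := by
      rw [Nat.cast_sub hm1, Nat.cast_sub hnN.le, Nat.cast_one]
    rw [hmcast, hc2]
    ring
  -- independence of T and S
  have hTS : IndepFun T S P := by
    have h0 := hindep.indepFun_finset sc s hdisj hxmeas
    have h1 := h0.comp (φ := fun v : (i : sc) → ℝ => ∑ i, v i)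
      (ψ := fun v : (i : s) → ℝ => ∑ i, v i)
      (Finset.measurable_sum Finset.univ (fun i _ => measurable_pi_apply i))
      (Finset.measurable_sum Finset.univ (fun i _ => measurable_pi_apply i))
    have e1 : ((fun v : (i : sc) → ℝ => ∑ i, v i) ∘ fun ω (i : sc) => x i ω) = T := by
      funext ω
      rw [Function.comp_apply, hT_apply]
      exact Finset.sum_coe_sort sc (fun i => x i ω)
    have e2 : ((fun v : (i : s) → ℝ => ∑ i, v i) ∘ fun ω (i : s) => x i ω) = S := by
      funext ω
      rw [Function.comp_apply, hS_apply]
      exact Finset.sum_coe_sort s (fun i => x i ω)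
    rwa [e1, e2] at h1
  have hI1 : IndepFun (fun ω => ENNReal.ofReal (T ω)) (fun ω => (ENNReal.ofReal (S ω))⁻¹) P :=
    hTS.comp ENNReal.measurable_ofReal (ENNReal.measurable_ofReal.inv)
  have hI2 : IndepFun (fun ω => (ENNReal.ofReal (T ω)) ^ 2)
      (fun ω => ((ENNReal.ofReal (S ω)) ^ 2)⁻¹) P :=
    hTS.comp ((ENNReal.measurable_ofReal).pow_const 2)
      (((ENNReal.measurable_ofReal).pow_const 2).inv)
  -- master identity
  set R : ℝ := 1 + 2 * ((N : ℝ) - n) * θ / ((n:ℝ) * θ - 1)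
        + ((N : ℝ) - n) * θ * (((N : ℝ) - n) * θ + 1) / (((n:ℝ) * θ - 1) * ((n:ℝ) * θ - 2))
    with hR_def
  have hd1 : (0:ℝ) < (n:ℝ) * θ - 1 := by linarith
  have hd2 : (0:ℝ) < (n:ℝ) * θ - 2 := by linarith
  have hm0 : (0:ℝ) ≤ (N : ℝ) - n := by
    have : (n:ℝ) ≤ N := by exact_mod_cast hnN.le
    linarith
  have hRnonneg : 0 ≤ R := by
    rw [hR_def]
    positivity
  have hmain : ∫⁻ ω, ENNReal.ofReal (((S ω + T ω) / S ω) ^ 2) ∂P = ENNReal.ofReal R := by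
    have hae : ∀ᵐ ω ∂P, ENNReal.ofReal (((S ω + T ω) / S ω) ^ 2)
        = 1 + 2 * (ENNReal.ofReal (T ω) * (ENNReal.ofReal (S ω))⁻¹)
          + (ENNReal.ofReal (T ω)) ^ 2 * ((ENNReal.ofReal (S ω)) ^ 2)⁻¹ := by
      filter_upwards [hSpos, hTpos] with ω ha hb
      have h1 : (S ω + T ω) / S ω = 1 + T ω / S ω := by
        field_simp
      have h2 : (1 + T ω / S ω) ^ 2 = 1 + 2 * (T ω / S ω) + (T ω / S ω) ^ 2 := by ring
      have hr : 0 ≤ T ω / S ω := by positivity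
      rw [h1, h2, ENNReal.ofReal_add (by positivity) (by positivity),
        ENNReal.ofReal_add (by norm_num) (by positivity), ENNReal.ofReal_one,
        ENNReal.ofReal_mul (by norm_num), ENNReal.ofReal_pow hr,
        ENNReal.ofReal_div_of_pos ha, ENNReal.ofReal_ofNat,
        div_eq_mul_inv, mul_pow, ENNReal.inv_pow]
    rw [lintegral_congr_ae hae]
    rw [lintegral_add_right _ (by fun_prop), lintegral_add_left (by fun_prop),
      lintegral_const_mul _ (by fun_prop)]
    rw [lintegral_mul_eq_lintegral_mul_lintegral_of_indepFun''
      (f := fun ω => ENNReal.ofReal (T ω)) (g := fun ω => (ENNReal.ofReal (S ω))⁻¹)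
      ((hTmeas.ennreal_ofReal).aemeasurable) ((hSmeas.ennreal_ofReal.inv :
        Measurable fun ω => (ENNReal.ofReal (S ω))⁻¹).aemeasurable) hI1]
    rw [lintegral_mul_eq_lintegral_mul_lintegral_of_indepFun''
      (f := fun ω => (ENNReal.ofReal (T ω)) ^ 2) (g := fun ω => ((ENNReal.ofReal (S ω)) ^ 2)⁻¹)
      (((hTmeas.ennreal_ofReal).pow_const 2).aemeasurable)
      (((hSmeas.ennreal_ofReal.pow_const 2).inv :
        Measurable fun ω => ((ENNReal.ofReal (S ω)) ^ 2)⁻¹).aemeasurable) hI2]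
    rw [hA, hB, hC, hD, lintegral_const, measure_univ, mul_one]
    rw [← ENNReal.ofReal_mul (by positivity), ← ENNReal.ofReal_mul (by positivity),
      ← ENNReal.ofReal_ofNat 2, ← ENNReal.ofReal_mul (by norm_num),
      ← ENNReal.ofReal_one, ← ENNReal.ofReal_add (by norm_num) (by positivity),
      ← ENNReal.ofReal_add (by positivity) (by positivity)]
    rw [hR_def]
    congr 1
    field_simp
  -- wrap up
  have hfeq : (fun ω =>
      ((∑ i, x i ω) / (∑ i ∈ Finset.univ.filter (fun i : Fin N => (i : ℕ) < n), x i ω)) ^ 2)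
      = fun ω => ((S ω + T ω) / S ω) ^ 2 := by
    funext ω
    rw [hS_apply, hT_apply, hs_def, hsc_def,
      Finset.sum_filter_add_sum_filter_not Finset.univ (fun i : Fin N => (i : ℕ) < n)
        (fun i => x i ω)]
  have hfmeas : Measurable fun ω => ((S ω + T ω) / S ω) ^ 2 :=
    (((hSmeas.add hTmeas).div hSmeas).pow_const 2)
  have hfnonneg : ∀ ω, 0 ≤ ((S ω + T ω) / S ω) ^ 2 := fun ω => sq_nonneg _
  constructor
  · rw [hfeq]
    refine ⟨hfmeas.aestronglyMeasurable, ?_⟩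
    rw [hasFiniteIntegral_iff_ofReal (ae_of_all _ hfnonneg), hmain]
    exact ENNReal.ofReal_lt_top
  · rw [hfeq, integral_eq_lintegral_of_nonneg_ae (ae_of_all _ hfnonneg)
      hfmeas.aestronglyMeasurable, hmain, ENNReal.toReal_ofReal hRnonneg]
end
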